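/- Let G be a locally compact unimodular group, (π, H) a square-integrable unitary representation with formal dimension d_π, a ∈ L^∞(G), and S a trace-class operator on H. Then the weak integral a ∗ S = ∫_G a(g) π(g) S π(g)⁻¹ dμ_G(g) defines a bounded operator with ‖a ∗ S‖ ≤ (1/d_π)·‖a‖_∞·‖S‖₁. -/

import Mathlib

/-!
Write `S = ∑ᵢ fᵢ ⊗ h̄ᵢ`. Moving `π g` across the inner product, the integrand of `⟪T u, v⟫` is
bounded by `M ∑ᵢ |⟪π g hᵢ, u⟫| |⟪π g fᵢ, v⟫|`. Integrating term by term in `ℝ≥0∞` (so that no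
measurability of `a` is needed), Cauchy–Schwarz and the orthogonality relation for the matrix
coefficients bound the `i`-th term by `d⁻¹ ‖u‖ ‖hᵢ‖ ‖v‖ ‖fᵢ‖`. Summing over `i` gives
`|⟪T u, v⟫| ≤ d⁻¹ M ‖S‖₁ ‖u‖ ‖v‖`.
-/

open MeasureTheory
open scoped InnerProductSpace

section RankOneSum

variable {𝕜 E ι : Type*} [RCLike 𝕜] [NormedAddCommGroup E] [InnerProductSpace 𝕜 E]
  [CompleteSpace E] {f h : ι → E}

theorem summable_inner_smul_of_summable_norm_mul_norm
    (hsum : Summable fun i => ‖f i‖ * ‖h i‖) (x : E) :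
    Summable fun i => ⟪h i, x⟫_𝕜 • f i := by
  refine Summable.of_norm_bounded (hsum.mul_right ‖x‖) fun i => ?_
  calc ‖⟪h i, x⟫_𝕜 • f i‖ ≤ ‖h i‖ * ‖x‖ * ‖f i‖ := by
        rw [norm_smul]; gcongr; exact norm_inner_le_norm _ _
    _ = ‖f i‖ * ‖h i‖ * ‖x‖ := by ring

theorem enorm_inner_tsum_smul_le (hsum : Summable fun i => ‖f i‖ * ‖h i‖) (x y : E) :
    ‖⟪∑' i, ⟪h i, x⟫_𝕜 • f i, y⟫_𝕜‖ₑ ≤ ∑' i, ‖⟪h i, x⟫_𝕜‖ₑ * ‖⟪f i, y⟫_𝕜‖ₑ :=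
  calc ‖⟪∑' i, ⟪h i, x⟫_𝕜 • f i, y⟫_𝕜‖ₑ = ‖∑' i, ⟪y, ⟪h i, x⟫_𝕜 • f i⟫_𝕜‖ₑ := by
        rw [← inner_conj_symm, RCLike.enorm_conj]
        exact congrArg enorm
          ((innerSL 𝕜 y).map_tsum (summable_inner_smul_of_summable_norm_mul_norm hsum x))
    _ ≤ ∑' i, ‖⟪y, ⟪h i, x⟫_𝕜 • f i⟫_𝕜‖ₑ := enorm_tsum_le_tsum_enorm
    _ = ∑' i, ‖⟪h i, x⟫_𝕜‖ₑ * ‖⟪f i, y⟫_𝕜‖ₑ := by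
        simp only [inner_smul_right, enorm_mul, ← inner_conj_symm (f _) y, RCLike.enorm_conj]

end RankOneSum

section CauchySchwarz

variable {α E : Type*} [MeasurableSpace α] {μ : Measure α} [NormedAddCommGroup E] {φ ψ : α → E}

theorem aemeasurable_enorm_of_integrable_norm_sq (hφ : Integrable (fun x => ‖φ x‖ ^ 2) μ) :
    AEMeasurable (fun x => ‖φ x‖ₑ) μ := by
  have h := hφ.aemeasurable.sqrt.ennreal_ofReal
  simpa only [Real.sqrt_sq (norm_nonneg _), ofReal_norm] using h

theorem lintegral_enorm_sq_eq_ofReal_integral (hφ : Integrable (fun x => ‖φ x‖ ^ 2) μ) :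
    ∫⁻ x, ‖φ x‖ₑ ^ 2 ∂μ = ENNReal.ofReal (∫ x, ‖φ x‖ ^ 2 ∂μ) := by
  rw [ofReal_integral_eq_lintegral_ofReal hφ (ae_of_all _ fun x => by positivity)]
  simp only [ENNReal.ofReal_pow (norm_nonneg _), ofReal_norm]

theorem lintegral_enorm_mul_le_of_integrable_norm_sq (hφ : Integrable (fun x => ‖φ x‖ ^ 2) μ)
    (hψ : Integrable (fun x => ‖ψ x‖ ^ 2) μ) :
    ∫⁻ x, ‖φ x‖ₑ * ‖ψ x‖ₑ ∂μ
      ≤ ENNReal.ofReal (√(∫ x, ‖φ x‖ ^ 2 ∂μ) * √(∫ x, ‖ψ x‖ ^ 2 ∂μ)) := by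
  have holder := ENNReal.lintegral_mul_le_Lp_mul_Lq μ Real.HolderConjugate.two_two
    (aemeasurable_enorm_of_integrable_norm_sq hφ) (aemeasurable_enorm_of_integrable_norm_sq hψ)
  simp only [ENNReal.rpow_two, Pi.mul_apply, lintegral_enorm_sq_eq_ofReal_integral hφ,
    lintegral_enorm_sq_eq_ofReal_integral hψ] at holder
  rwa [ENNReal.ofReal_mul (Real.sqrt_nonneg _), Real.sqrt_eq_rpow, Real.sqrt_eq_rpow, 
    ← ENNReal.ofReal_rpow_of_nonneg (integral_nonneg fun _ => by positivity) (by norm_num),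
    ← ENNReal.ofReal_rpow_of_nonneg (integral_nonneg fun _ => by positivity) (by norm_num)]

end CauchySchwarz

section UnitaryRepresentation

variable {𝕜 G H ι : Type*} [RCLike 𝕜] [Group G] [NormedAddCommGroup H] [InnerProductSpace 𝕜 H]
  {π : G →* (H →L[𝕜] H)}

theorem inner_map_inv_right_of_inner_map_map (hπ : ∀ g u v, ⟪π g u, π g v⟫_𝕜 = ⟪u, v⟫_𝕜)
    (g : G) (w u : H) : ⟪w, π g⁻¹ u⟫_𝕜 = ⟪π g w, u⟫_𝕜 := by
  have hw : π g⁻¹ (π g w) = w := by simpa using DFunLike.congr_fun (map_mul π g⁻¹ g).symm w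
  rw [← hπ g⁻¹ (π g w) u, hw]

theorem enorm_inner_conj_tsum_smul_le [CompleteSpace H]
    (hπ : ∀ g u v, ⟪π g u, π g v⟫_𝕜 = ⟪u, v⟫_𝕜) {S : H → H} {f h : ι → H}
    (hS : ∀ u, S u = ∑' i, ⟪h i, u⟫_𝕜 • f i) (hsum : Summable fun i => ‖f i‖ * ‖h i‖)
    (g : G) (u v : H) :
    ‖⟪π g (S (π g⁻¹ u)), v⟫_𝕜‖ₑ ≤ ∑' i, ‖⟪π g (h i), u⟫_𝕜‖ₑ * ‖⟪π g (f i), v⟫_𝕜‖ₑ := by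
  rw [← inner_map_inv_right_of_inner_map_map hπ]
  simpa only [hS, inner_map_inv_right_of_inner_map_map hπ] using
    enorm_inner_tsum_smul_le (𝕜 := 𝕜) hsum (π g⁻¹ u) (π g⁻¹ v)

variable [MeasurableSpace G] {μ : Measure G} {d : ℝ}

theorem integrable_norm_inner_sq (hd : 0 < d)
    (hsq : ∀ v w : H, ∫ g, ‖⟪π g w, v⟫_𝕜‖ ^ 2 ∂μ = 1 / d * ‖v‖ ^ 2 * ‖w‖ ^ 2) (w v : H) :
    Integrable (fun g => ‖⟪π g w, v⟫_𝕜‖ ^ 2) μ := by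
  -- away from the trivial cases the Bochner integral is nonzero, which forces integrability
  rcases eq_or_ne w 0 with rfl | hw
  · simp
  rcases eq_or_ne v 0 with rfl | hv
  · simp
  refine Integrable.of_integral_ne_zero ?_
  rw [hsq]
  positivity

theorem lintegral_enorm_inner_mul_enorm_inner_le (hd : 0 < d)
    (hsq : ∀ v w : H, ∫ g, ‖⟪π g w, v⟫_𝕜‖ ^ 2 ∂μ = 1 / d * ‖v‖ ^ 2 * ‖w‖ ^ 2) (w v w' v' : H) :
    ∫⁻ g, ‖⟪π g w, v⟫_𝕜‖ₑ * ‖⟪π g w', v'⟫_𝕜‖ₑ ∂μ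
      ≤ ENNReal.ofReal (1 / d * (‖v‖ * ‖w‖) * (‖v'‖ * ‖w'‖)) := by
  refine (lintegral_enorm_mul_le_of_integrable_norm_sq (integrable_norm_inner_sq hd hsq w v)
    (integrable_norm_inner_sq hd hsq w' v')).trans_eq ?_
  rw [hsq, hsq, ← Real.sqrt_mul (by positivity),
    show 1 / d * ‖v‖ ^ 2 * ‖w‖ ^ 2 * (1 / d * ‖v'‖ ^ 2 * ‖w'‖ ^ 2)
      = (1 / d * (‖v‖ * ‖w‖) * (‖v'‖ * ‖w'‖)) ^ 2 by ring,
    Real.sqrt_sq (by positivity)]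

theorem lintegral_enorm_mul_inner_conj_le [CompleteSpace H] [Countable ι]
    (hπ : ∀ g u v, ⟪π g u, π g v⟫_𝕜 = ⟪u, v⟫_𝕜) (hd : 0 < d)
    (hsq : ∀ v w : H, ∫ g, ‖⟪π g w, v⟫_𝕜‖ ^ 2 ∂μ = 1 / d * ‖v‖ ^ 2 * ‖w‖ ^ 2)
    {a : G → 𝕜} {M : ℝ} (hM : ∀ g, ‖a g‖ ≤ M) {S : H → H} {f h : ι → H}
    (hS : ∀ u, S u = ∑' i, ⟪h i, u⟫_𝕜 • f i) (hsum : Summable fun i => ‖f i‖ * ‖h i‖)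
    (u v : H) :
    ∫⁻ g, ‖a g * ⟪π g (S (π g⁻¹ u)), v⟫_𝕜‖ₑ ∂μ
      ≤ ENNReal.ofReal (1 / d * M * (∑' i, ‖f i‖ * ‖h i‖) * ‖u‖ * ‖v‖) := by
  have hM0 : 0 ≤ M := (norm_nonneg _).trans (hM 1)
  have hmeas (w x : H) : AEMeasurable (fun g => ‖⟪π g w, x⟫_𝕜‖ₑ) μ :=
    aemeasurable_enorm_of_integrable_norm_sq (integrable_norm_inner_sq hd hsq w x)
  calc ∫⁻ g, ‖a g * ⟪π g (S (π g⁻¹ u)), v⟫_𝕜‖ₑ ∂μ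
      ≤ ∫⁻ g, ENNReal.ofReal M * ∑' i, ‖⟪π g (h i), u⟫_𝕜‖ₑ * ‖⟪π g (f i), v⟫_𝕜‖ₑ ∂μ := by
        refine lintegral_mono fun g => ?_
        rw [enorm_mul, ← ofReal_norm]
        gcongr
        · exact hM g
        · exact enorm_inner_conj_tsum_smul_le hπ hS hsum g u v
    _ = ENNReal.ofReal M * ∑' i, ∫⁻ g, ‖⟪π g (h i), u⟫_𝕜‖ₑ * ‖⟪π g (f i), v⟫_𝕜‖ₑ ∂μ := by
        rw [lintegral_const_mul' _ _ ENNReal.ofReal_ne_top]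
        exact congrArg _ (lintegral_tsum fun i => (hmeas (h i) u).mul (hmeas (f i) v))
    _ ≤ ENNReal.ofReal M * ∑' i, ENNReal.ofReal (1 / d * ‖u‖ * ‖v‖ * (‖f i‖ * ‖h i‖)) := by
        gcongr with i
        refine (lintegral_enorm_inner_mul_enorm_inner_le hd hsq _ _ _ _).trans_eq ?_
        ring_nf
    _ = ENNReal.ofReal (1 / d * M * (∑' i, ‖f i‖ * ‖h i‖) * ‖u‖ * ‖v‖) := by
        rw [← ENNReal.ofReal_tsum_of_nonneg (fun i => by positivity) (hsum.mul_left _),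
          ← ENNReal.ofReal_mul hM0, tsum_mul_left]
        ring_nf

end UnitaryRepresentation

theorem conv_bounded_function_trace_class_norm_bound_general
    {G : Type*} [Group G]
    [MeasurableSpace G]
    (μ : Measure G)
    {H : Type*} [NormedAddCommGroup H] [InnerProductSpace ℂ H] [CompleteSpace H]
    (π : G →* (H →L[ℂ] H))
    (hπ : ∀ (g : G) (u v : H), ⟪π g u, π g v⟫_ℂ = ⟪u, v⟫_ℂ)
    (d : ℝ) (hd : 0 < d)
    (hsq : ∀ v w : H, ∫ g, ‖⟪π g w, v⟫_ℂ‖ ^ 2 ∂μ = (1 / d) * ‖v‖ ^ 2 * ‖w‖ ^ 2)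
    (a : G → ℂ) (M : ℝ) (hM : ∀ g : G, ‖a g‖ ≤ M)
    (S : H →L[ℂ] H) (f h : ℕ → H)
    (hS : ∀ u : H, S u = ∑' i : ℕ, ⟪h i, u⟫_ℂ • f i)
    (hsum : Summable fun i : ℕ => ‖f i‖ * ‖h i‖)
    (T : H →L[ℂ] H)
    (hT : ∀ u v : H, ⟪T u, v⟫_ℂ = ∫ g, a g * ⟪π g (S (π g⁻¹ u)), v⟫_ℂ ∂μ) :
    ‖T‖ ≤ (1 / d) * M * ∑' i : ℕ, ‖f i‖ * ‖h i‖ := by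
  have hM0 : 0 ≤ M := (norm_nonneg _).trans (hM 1)
  refine T.opNorm_le_of_re_inner_le (by positivity) fun u v hu hv => ?_
  calc RCLike.re ⟪T u, v⟫_ℂ ≤ ‖⟪T u, v⟫_ℂ‖ := RCLike.re_le_norm _
    _ ≤ (∫⁻ g, ‖a g * ⟪π g (S (π g⁻¹ u)), v⟫_ℂ‖ₑ ∂μ).toReal := by
        rw [hT]
        simpa only [ofReal_norm] using
          norm_integral_le_lintegral_norm (μ := μ) fun g => a g * ⟪π g (S (π g⁻¹ u)), v⟫_ℂ
    _ ≤ 1 / d * M * (∑' i, ‖f i‖ * ‖h i‖) * ‖u‖ * ‖v‖ :=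
        ENNReal.toReal_le_of_le_ofReal (by positivity)
          (lintegral_enorm_mul_inner_conj_le hπ hd hsq hM hS hsum u v)
    _ = 1 / d * M * ∑' i, ‖f i‖ * ‖h i‖ := by rw [hu, hv, mul_one, mul_one]

/-- let `G` be a locally compact unimodular group, `(π, H)` a square-integrable
unitary representation with formal dimension `d_π` (characterized by
`∫_G |⟨v, π(g)w⟩|² dμ(g) = (1/d_π)‖v‖²‖w‖²`), `a ∈ L^∞(G)` with `‖a‖_∞ ≤ M`, and `S` a
trace-class operator on `H` given by the rank-one decomposition `S = ∑ᵢ fᵢ ⊗ h̄ᵢ` with trace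
norm `‖S‖₁ = ∑ᵢ ‖fᵢ‖‖hᵢ‖`. Then the weak integral `a ∗ S = ∫_G a(g) π(g) S π(g)⁻¹ dμ(g)`
defines a bounded operator with `‖a ∗ S‖ ≤ (1/d_π)·‖a‖_∞·‖S‖₁`. -/
theorem conv_bounded_function_trace_class_norm_bound
    {G : Type*} [Group G] [TopologicalSpace G] [IsTopologicalGroup G] [LocallyCompactSpace G]
    [MeasurableSpace G] [BorelSpace G]
    (μ : Measure G) [μ.IsHaarMeasure] [μ.IsMulRightInvariant]
    {H : Type*} [NormedAddCommGroup H] [InnerProductSpace ℂ H] [CompleteSpace H]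
    (π : G →* (H →L[ℂ] H))
    (hπ : ∀ (g : G) (u v : H), ⟪π g u, π g v⟫_ℂ = ⟪u, v⟫_ℂ)
    (d : ℝ) (hd : 0 < d)
    (hsq : ∀ v w : H, ∫ g, ‖⟪π g w, v⟫_ℂ‖ ^ 2 ∂μ = (1 / d) * ‖v‖ ^ 2 * ‖w‖ ^ 2)
    (a : G → ℂ) (M : ℝ) (hM : ∀ g : G, ‖a g‖ ≤ M)
    (S : H →L[ℂ] H) (f h : ℕ → H)
    (hS : ∀ u : H, S u = ∑' i : ℕ, ⟪h i, u⟫_ℂ • f i)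
    (hsum : Summable fun i : ℕ => ‖f i‖ * ‖h i‖)
    (T : H →L[ℂ] H)
    (hT : ∀ u v : H, ⟪T u, v⟫_ℂ = ∫ g, a g * ⟪π g (S (π g⁻¹ u)), v⟫_ℂ ∂μ) :
    ‖T‖ ≤ (1 / d) * M * ∑' i : ℕ, ‖f i‖ * ‖h i‖ :=
  conv_bounded_function_trace_class_norm_bound_general μ π hπ d hd hsq a M hM S f h hS hsum T hT
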